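/- (Theorem 1.) Let V1, V1', A1, A1', C, C', A2, A2', V2, V2' be subsets of ℕ → Σ with V1 ⊆ V1', V2 ⊆ V2', C ⊆ C', A1 ⊆ A1' and A2 ⊆ A2' (each primed component over-approximates the corresponding unprimed one), and let S = V1 ∩ A1 ∩ C ∩ A2 ∩ V2 be the full system. Let φa and φt be linear-time properties (sets of traces). If (a) V1' ∩ A1 ∩ C' ⊨ φa, (b) V2' ∩ A2 ∩ C' ⊨ φa, and (c) V1 ∩ A1' ∩ C ∩ A2' ∩ V2 ⊨ φt, then S ⊨ φa ∩ φt, i.e., every trace of S belongs to both φa and φt. -/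

import Mathlib

theorem theorem_one_general {α : Type*}
    (V1 V1' A1 A1' C C' A2 A2' V2 φa φt : Set (ℕ → α))
    (hV1 : V1 ⊆ V1') (hC : C ⊆ C')
    (hA1 : A1 ⊆ A1') (hA2 : A2 ⊆ A2')
    (S : Set (ℕ → α)) (hS : S = V1 ∩ A1 ∩ C ∩ A2 ∩ V2)
    (ha : ∀ σ ∈ V1' ∩ A1 ∩ C', σ ∈ φa)
    (hc : ∀ σ ∈ V1 ∩ A1' ∩ C ∩ A2' ∩ V2, σ ∈ φt) :
    ∀ σ ∈ S, σ ∈ φa ∩ φt := by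
  subst hS
  have hS_le_left : V1 ∩ A1 ∩ C ∩ A2 ∩ V2 ⊆ V1' ∩ A1 ∩ C' :=
    Set.inter_subset_left.trans <| Set.inter_subset_left.trans (by gcongr)
  have hS_le_abstracted : V1 ∩ A1 ∩ C ∩ A2 ∩ V2 ⊆ V1 ∩ A1' ∩ C ∩ A2' ∩ V2 := by gcongr
  exact Set.subset_inter (hS_le_left.trans ha) (hS_le_abstracted.trans hc)

theorem theorem_one {α : Type*}
    (V1 V1' A1 A1' C C' A2 A2' V2 V2' φa φt : Set (ℕ → α))
    (hV1 : V1 ⊆ V1') (hV2 : V2 ⊆ V2') (hC : C ⊆ C')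
    (hA1 : A1 ⊆ A1') (hA2 : A2 ⊆ A2')
    (S : Set (ℕ → α)) (hS : S = V1 ∩ A1 ∩ C ∩ A2 ∩ V2)
    (ha : ∀ σ ∈ V1' ∩ A1 ∩ C', σ ∈ φa)
    (hb : ∀ σ ∈ V2' ∩ A2 ∩ C', σ ∈ φa)
    (hc : ∀ σ ∈ V1 ∩ A1' ∩ C ∩ A2' ∩ V2, σ ∈ φt) :
    ∀ σ ∈ S, σ ∈ φa ∩ φt :=
  theorem_one_general V1 V1' A1 A1' C C' A2 A2' V2 φa φt hV1 hC hA1 hA2 S hS ha hc
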